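/- arXiv:1312.2786 — 2 statements merged into one kernel-verified Lean document; each statement's English description precedes it below -/
import Mathlib

section
/- Under the SLOCC action P ↦ g*P of g ∈ GL(6,ℂ) on three-forms (acting by the inverse-transpose on each index), the quartic invariant transforms as 𝒟(g*P) = (Det g)^{-2} 𝒟(P); in particular 𝒟 is invariant under SL(6,ℂ). -/
open Finset


/-- The Levi-Civita symbol `ε^{i_1 ... i_6}` on six indices. -/
noncomputable def eps6 (f : Fin 6 → Fin 6) : ℂ :=
  if h : Function.Bijective f then ((Equiv.Perm.sign (Equiv.ofBijective f h) : ℤ) : ℂ) else 0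

lemma sum_pi_cons {n : ℕ} {M : Type*} [AddCommMonoid M] (F : (Fin (n+1) → Fin 6) → M) :
    ∑ f : Fin (n+1) → Fin 6, F f = ∑ i : Fin 6, ∑ v : Fin n → Fin 6, F (Fin.cons i v) := by
  rw [← (Fin.consEquiv (fun _ => Fin 6)).sum_comp F, Fintype.sum_prod_type]
  rfl

lemma sum_pi5 {M : Type*} [AddCommMonoid M] (G : (Fin 5 → Fin 6) → M) :
    ∑ v : Fin 5 → Fin 6, G v
      = ∑ i1, ∑ i2, ∑ i3, ∑ i4, ∑ i5, G ![i1, i2, i3, i4, i5] := by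
  rw [sum_pi_cons]
  refine Finset.sum_congr rfl fun i1 _ => ?_
  rw [sum_pi_cons]
  refine Finset.sum_congr rfl fun i2 _ => ?_
  rw [sum_pi_cons]
  refine Finset.sum_congr rfl fun i3 _ => ?_
  rw [sum_pi_cons]
  refine Finset.sum_congr rfl fun i4 _ => ?_
  rw [sum_pi_cons]
  refine Finset.sum_congr rfl fun i5 _ => ?_
  rw [Fintype.sum_unique]
  congr 1

lemma eps_contract (M : Matrix (Fin 6) (Fin 6) ℂ) (b : Fin 6 → Fin 6) :
    ∑ f : Fin 6 → Fin 6, eps6 f * ∏ i, M (f i) (b i) = M.det * eps6 b := by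
  classical
  have h1 : ∑ f : Fin 6 → Fin 6, eps6 f * ∏ i, M (f i) (b i)
      = ∑ f ∈ univ.filter (fun f : Fin 6 → Fin 6 => Function.Bijective f),
          eps6 f * ∏ i, M (f i) (b i) := by
    refine (sum_filter_of_ne ?_).symm
    intro f _ hf
    by_contra hbij
    exact hf (by rw [eps6, dif_neg hbij, zero_mul])
  have h2 : ∑ f ∈ univ.filter (fun f : Fin 6 → Fin 6 => Function.Bijective f),
          eps6 f * ∏ i, M (f i) (b i)
      = ∑ σ : Equiv.Perm (Fin 6), ((Equiv.Perm.sign σ : ℤ) : ℂ) * ∏ i, M (σ i) (b i) := by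
    refine sum_bij (fun f hf => Equiv.ofBijective f (mem_filter.mp hf).2) ?_ ?_ ?_ ?_
    · intro f hf; exact mem_univ _
    · intro f hf f' hf' h
      have := congrArg (fun e => (e : Equiv.Perm (Fin 6)).toFun) h
      exact this
    · intro σ _
      exact ⟨⇑σ, mem_filter.mpr ⟨mem_univ _, σ.bijective⟩, Equiv.ext fun x => rfl⟩
    · intro f hf
      rw [eps6, dif_pos (mem_filter.mp hf).2]
      rfl
  rw [h1, h2]
  have h3 : (M.submatrix id b).det
      = ∑ σ : Equiv.Perm (Fin 6), ((Equiv.Perm.sign σ : ℤ) : ℂ) * ∏ i, M (σ i) (b i) := by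
    rw [Matrix.det_apply']
    rfl
  rw [← h3]
  by_cases hb : Function.Bijective b
  · have he : M.submatrix id b = M.submatrix id ⇑(Equiv.ofBijective b hb) := rfl
    rw [he, Matrix.det_permute', eps6, dif_pos hb]
    ring
  · rw [eps6, dif_neg hb, mul_zero]
    have hinj : ¬ Function.Injective b := by
      intro hi
      exact hb (Finite.injective_iff_bijective.mp hi)
    rw [Function.not_injective_iff] at hinj
    obtain ⟨i, j, hij, hne⟩ := hinj
    exact Matrix.det_zero_of_column_eq hne (fun k => by simp [Matrix.submatrix, hij])

lemma eps_contract5 (M : Matrix (Fin 6) (Fin 6) ℂ) (hM : IsUnit M.det) (a : Fin 6)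
    (u : Fin 5 → Fin 6) :
    ∑ v : Fin 5 → Fin 6, eps6 (Fin.cons a v) * ∏ k, M (v k) (u k)
      = M.det * ∑ c, M⁻¹ c a * eps6 (Fin.cons c u) := by
  classical
  set F : Fin 6 → ℂ := fun i0 => ∑ v : Fin 5 → Fin 6, eps6 (Fin.cons i0 v) * ∏ k, M (v k) (u k)
    with hF
  set w : Fin 6 → ℂ := fun c => M.det * eps6 (Fin.cons c u) with hw
  have key : M.transpose.mulVec F = w := by
    funext c
    have h0 := eps_contract M (Fin.cons c u)
    rw [sum_pi_cons] at h0
    have h1 : ∀ i0 : Fin 6, (∑ v : Fin 5 → Fin 6,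
        eps6 (Fin.cons i0 v) * ∏ i : Fin 6, M ((Fin.cons i0 v : Fin 6 → Fin 6) i) ((Fin.cons c u : Fin 6 → Fin 6) i))
        = M i0 c * F i0 := by
      intro i0
      rw [hF, Finset.mul_sum]
      refine Finset.sum_congr rfl fun v _ => ?_
      rw [Fin.prod_univ_succ]
      simp only [Fin.cons_zero, Fin.cons_succ]
      ring
    rw [Finset.sum_congr rfl (fun i0 _ => h1 i0)] at h0
    simpa [Matrix.mulVec, dotProduct, Matrix.transpose_apply, hw] using h0
  have hF' : F = (M.transpose)⁻¹.mulVec w := by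
    rw [← key, Matrix.mulVec_mulVec, Matrix.nonsing_inv_mul _ (by simpa using hM),
      Matrix.one_mulVec]
  have h2 : F a = M.transpose⁻¹.mulVec w a := congrFun hF' a
  rw [show (∑ v : Fin 5 → Fin 6, eps6 (Fin.cons a v) * ∏ k, M (v k) (u k)) = F a from rfl, h2,
    Matrix.mulVec, Finset.mul_sum]
  refine Finset.sum_congr rfl fun c _ => ?_
  rw [← Matrix.transpose_nonsing_inv]
  simp only [Matrix.transpose_apply, hw]
  ring

/-- Antisymmetry of the components of a three-form. -/
def Antisym3 (P : Fin 6 → Fin 6 → Fin 6 → ℂ) : Prop :=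
  (∀ i j k, P i j k = -P j i k) ∧ (∀ i j k, P i j k = -P i k j)

/-- The 6×6 matrix covariant `(K_P)^a_b = (1/12) ε^{a i_1 i_2 i_3 i_4 i_5} P_{b i_1 i_2} P_{i_3 i_4 i_5}`. -/
noncomputable def Kmat (P : Fin 6 → Fin 6 → Fin 6 → ℂ) : Matrix (Fin 6) (Fin 6) ℂ :=
  Matrix.of fun a b =>
    (1/12 : ℂ) * ∑ i1, ∑ i2, ∑ i3, ∑ i4, ∑ i5,
      eps6 ![a, i1, i2, i3, i4, i5] * P b i1 i2 * P i3 i4 i5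

/-- The quartic invariant `𝒟(P) = (1/6) Tr(K_P²)`. -/
noncomputable def Dinv (P : Fin 6 → Fin 6 → Fin 6 → ℂ) : ℂ :=
  (1/6 : ℂ) * Matrix.trace (Kmat P * Kmat P)

noncomputable def KK (P : Fin 6 → Fin 6 → Fin 6 → ℂ) : Matrix (Fin 6) (Fin 6) ℂ :=
  Matrix.of fun a b =>
    (1/12 : ℂ) * ∑ v : Fin 5 → Fin 6,
      eps6 (Fin.cons a v) * P b (v 0) (v 1) * P (v 2) (v 3) (v 4)

lemma Kmat_eq_KK (P : Fin 6 → Fin 6 → Fin 6 → ℂ) : Kmat P = KK P := by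
  ext a b
  show (1/12 : ℂ) * _ = (1/12 : ℂ) * _
  congr 1
  rw [sum_pi5 (fun v : Fin 5 → Fin 6 =>
    eps6 (Fin.cons a v) * P b (v 0) (v 1) * P (v 2) (v 3) (v 4))]
  rfl

lemma K_transform (h : Matrix (Fin 6) (Fin 6) ℂ) (hh : IsUnit h.det)
    (P : Fin 6 → Fin 6 → Fin 6 → ℂ) :
    KK (fun i j k => ∑ p, ∑ q, ∑ r, h i p * h j q * h k r * P p q r)
      = h.det • ((h⁻¹).transpose * KK P * h.transpose) := by
  classical
  set Q : Fin 6 → Fin 6 → Fin 6 → ℂ :=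
    fun i j k => ∑ p, ∑ q, ∑ r, h i p * h j q * h k r * P p q r with hQ
  ext a b
  show (1/12 : ℂ) * (∑ v : Fin 5 → Fin 6,
      eps6 (Fin.cons a v) * Q b (v 0) (v 1) * Q (v 2) (v 3) (v 4)) = _
  have hA : ∀ (v : Fin 5 → Fin 6),
      Q b (v 0) (v 1) * Q (v 2) (v 3) (v 4)
      = ∑ p, ∑ u : Fin 5 → Fin 6,
          h b p * (∏ k, h (v k) (u k)) * (P p (u 0) (u 1) * P (u 2) (u 3) (u 4)) := by
    intro v
    have hB : ∀ p : Fin 6, (∑ u : Fin 5 → Fin 6,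
        h b p * (∏ k, h (v k) (u k)) * (P p (u 0) (u 1) * P (u 2) (u 3) (u 4)))
        = ∑ q, ∑ r, ∑ s, ∑ t, ∑ w,
            h b p * (h (v 0) q * h (v 1) r * h (v 2) s * h (v 3) t * h (v 4) w)
              * (P p q r * P s t w) := by
      intro p
      rw [sum_pi5 (fun u : Fin 5 → Fin 6 =>
        h b p * (∏ k, h (v k) (u k)) * (P p (u 0) (u 1) * P (u 2) (u 3) (u 4)))]
      refine Finset.sum_congr rfl fun q _ => Finset.sum_congr rfl fun r _ =>
        Finset.sum_congr rfl fun s _ => Finset.sum_congr rfl fun t _ =>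
        Finset.sum_congr rfl fun w _ => ?_
      rw [Fin.prod_univ_five]
      rfl
    rw [Finset.sum_congr rfl (fun p _ => hB p)]
    show (∑ p, ∑ q, ∑ r, h b p * h (v 0) q * h (v 1) r * P p q r)
        * (∑ s, ∑ t, ∑ w, h (v 2) s * h (v 3) t * h (v 4) w * P s t w) = _
    conv_lhs => rw [mul_comm]
    simp only [Finset.sum_mul, Finset.mul_sum]
    refine Finset.sum_congr rfl fun p _ => Finset.sum_congr rfl fun q _ =>
      Finset.sum_congr rfl fun r _ => Finset.sum_congr rfl fun s _ =>
      Finset.sum_congr rfl fun t _ => Finset.sum_congr rfl fun w _ => ?_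
    ring
  have step1 : (∑ v : Fin 5 → Fin 6,
      eps6 (Fin.cons a v) * Q b (v 0) (v 1) * Q (v 2) (v 3) (v 4))
      = ∑ v : Fin 5 → Fin 6, ∑ p, ∑ u : Fin 5 → Fin 6,
          eps6 (Fin.cons a v) * (h b p * (∏ k, h (v k) (u k))
            * (P p (u 0) (u 1) * P (u 2) (u 3) (u 4))) := by
    refine Finset.sum_congr rfl fun v _ => ?_
    rw [mul_assoc, hA v, Finset.mul_sum]
    exact Finset.sum_congr rfl fun p _ => Finset.mul_sum _ _ _
  have step2 : (∑ v : Fin 5 → Fin 6, ∑ p, ∑ u : Fin 5 → Fin 6,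
          eps6 (Fin.cons a v) * (h b p * (∏ k, h (v k) (u k))
            * (P p (u 0) (u 1) * P (u 2) (u 3) (u 4))))
      = ∑ p, ∑ u : Fin 5 → Fin 6, ∑ v : Fin 5 → Fin 6,
          eps6 (Fin.cons a v) * (h b p * (∏ k, h (v k) (u k))
            * (P p (u 0) (u 1) * P (u 2) (u 3) (u 4))) := by
    rw [Finset.sum_comm]
    exact Finset.sum_congr rfl fun p _ => Finset.sum_comm
  have step3 : ∀ (p : Fin 6) (u : Fin 5 → Fin 6),
      (∑ v : Fin 5 → Fin 6, eps6 (Fin.cons a v) * (h b p * (∏ k, h (v k) (u k))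
            * (P p (u 0) (u 1) * P (u 2) (u 3) (u 4))))
      = (h b p * (P p (u 0) (u 1) * P (u 2) (u 3) (u 4)))
          * (h.det * ∑ c, h⁻¹ c a * eps6 (Fin.cons c u)) := by
    intro p u
    rw [← eps_contract5 h hh a u, Finset.mul_sum]
    exact Finset.sum_congr rfl fun v _ => by ring
  rw [step1, step2, Finset.sum_congr rfl (fun p _ => Finset.sum_congr rfl fun u _ => step3 p u)]
  -- canonical form
  have lhs_eq : (1/12 : ℂ) * (∑ p, ∑ u : Fin 5 → Fin 6,
      (h b p * (P p (u 0) (u 1) * P (u 2) (u 3) (u 4)))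
          * (h.det * ∑ c, h⁻¹ c a * eps6 (Fin.cons c u)))
      = ∑ p, ∑ u : Fin 5 → Fin 6, ∑ c, (1/12 : ℂ) * (h.det * (h⁻¹ c a * (h b p
          * (eps6 (Fin.cons c u) * (P p (u 0) (u 1) * P (u 2) (u 3) (u 4)))))) := by
    rw [Finset.mul_sum]
    refine Finset.sum_congr rfl fun p _ => ?_
    rw [Finset.mul_sum]
    refine Finset.sum_congr rfl fun u _ => ?_
    rw [Finset.mul_sum, Finset.mul_sum, Finset.mul_sum]
    exact Finset.sum_congr rfl fun c _ => by ring
  rw [lhs_eq]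
  show _ = (h.det • ((h⁻¹).transpose * KK P * h.transpose)) a b
  simp only [Matrix.smul_apply, smul_eq_mul, Matrix.mul_apply, Matrix.transpose_apply,
    KK, Matrix.of_apply]
  simp only [Finset.sum_mul, Finset.mul_sum]
  refine Finset.sum_congr rfl fun p _ => ?_
  rw [Finset.sum_comm]
  exact Finset.sum_congr rfl fun c _ => Finset.sum_congr rfl fun u _ => by ring

/-- The SLOCC action `(g*P)_{ijk} = (g')_i^{a}(g')_j^{b}(g')_k^{c} P_{abc}`
with `g' = (gᵗ)⁻¹`, of `g ∈ GL(6,ℂ)` on three-forms. -/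
noncomputable def sloccAction (g : Matrix (Fin 6) (Fin 6) ℂ)
    (P : Fin 6 → Fin 6 → Fin 6 → ℂ) : Fin 6 → Fin 6 → Fin 6 → ℂ :=
  fun i j k => ∑ a, ∑ b, ∑ c,
    (g.transpose)⁻¹ i a * (g.transpose)⁻¹ j b * (g.transpose)⁻¹ k c * P a b c

/-- under the SLOCC action of `g ∈ GL(6,ℂ)` the quartic invariant
transforms as `𝒟(g*P) = (Det g)⁻² 𝒟(P)`; in particular `𝒟` is invariant under
`SL(6,ℂ)` (i.e. when `Det g = 1`). -/
theorem Dinv_slocc_covariance (g : Matrix (Fin 6) (Fin 6) ℂ) (hg : IsUnit g.det)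
    (P : Fin 6 → Fin 6 → Fin 6 → ℂ) (hP : Antisym3 P) :
    Dinv (sloccAction g P) = (g.det)⁻¹ ^ 2 * Dinv P ∧
    (g.det = 1 → Dinv (sloccAction g P) = Dinv P) := by
  classical
  set h : Matrix (Fin 6) (Fin 6) ℂ := (g.transpose)⁻¹ with hh_def
  have hgne : g.det ≠ 0 := hg.ne_zero
  have hdet : h.det = (g.det)⁻¹ := by
    rw [hh_def, Matrix.det_nonsing_inv, Matrix.det_transpose, Ring.inverse_eq_inv]
  have hh : IsUnit h.det := by
    rw [hdet]
    exact isUnit_iff_ne_zero.mpr (inv_ne_zero hgne)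
  set A : Matrix (Fin 6) (Fin 6) ℂ := (h⁻¹).transpose with hA_def
  set B : Matrix (Fin 6) (Fin 6) ℂ := h.transpose with hB_def
  have hK : Kmat (sloccAction g P) = h.det • (A * KK P * B) := by
    rw [Kmat_eq_KK]
    have e1 : sloccAction g P
        = fun i j k => ∑ p, ∑ q, ∑ r, h i p * h j q * h k r * P p q r := rfl
    rw [e1]
    exact K_transform h hh P
  have hBA : B * A = 1 := by
    rw [hB_def, hA_def, ← Matrix.transpose_mul, Matrix.nonsing_inv_mul h hh,
      Matrix.transpose_one]
  set K : Matrix (Fin 6) (Fin 6) ℂ := KK P with hKdef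
  have hmain : Dinv (sloccAction g P) = (g.det)⁻¹ ^ 2 * Dinv P := by
    rw [Dinv, hK]
    have e2 : (h.det • (A * K * B)) * (h.det • (A * K * B))
        = (h.det * h.det) • ((A * K * B) * (A * K * B)) := by
      rw [Matrix.smul_mul, Matrix.mul_smul, smul_smul]
    have e3 : (A * K * B) * (A * K * B) = A * (K * (K * B)) := by
      simp only [Matrix.mul_assoc]
      rw [show B * (A * (K * B)) = (B * A) * (K * B) from (Matrix.mul_assoc B A (K * B)).symm,
        hBA, Matrix.one_mul]
    have e4 : Matrix.trace (A * (K * (K * B))) = Matrix.trace (K * K) := by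
      rw [Matrix.trace_mul_comm, Matrix.mul_assoc, Matrix.mul_assoc,
        hBA, Matrix.mul_one]
    rw [e2, e3, Matrix.trace_smul, e4, smul_eq_mul, hdet, Dinv, Kmat_eq_KK, ← hKdef]
    ring
  exact ⟨hmain, fun h1 => by rw [hmain, h1]; simp⟩
end

section
/- The dual three-form P̃ with components P̃_{abc} = P_{bcd}(K_P)^d_a satisfies 𝒟(P) = (1/2){P̃, P}, where {·,·} is the symplectic form {P,Q} = (1/(3!3!)) ε^{ijklmn} P_{ijk} Q_{lmn} on ∧³(ℂ^6)*. -/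
/-- The dual three-form `P̃` with components `P̃_{abc} = P_{bcd} (K_P)^d_a`. -/
noncomputable def Ptilde (P : Fin 6 → Fin 6 → Fin 6 → ℂ) : Fin 6 → Fin 6 → Fin 6 → ℂ :=
  fun a b c => ∑ d, P b c d * Kmat P d a

private lemma pull3 {M : Type*} [AddCommMonoid M] (g : Fin 6 → Fin 6 → Fin 6 → M) :
    (∑ a, ∑ b, ∑ c, g a b c) = ∑ c, ∑ a, ∑ b, g a b c :=
  (Finset.sum_congr rfl fun a _ => Finset.sum_comm).trans Finset.sum_comm

private lemma pull4 {M : Type*} [AddCommMonoid M] (g : Fin 6 → Fin 6 → Fin 6 → Fin 6 → M) :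
    (∑ a, ∑ b, ∑ c, ∑ d, g a b c d) = ∑ d, ∑ a, ∑ b, ∑ c, g a b c d :=
  (Finset.sum_congr rfl fun a _ => pull3 (g a)).trans Finset.sum_comm

private lemma pull5 {M : Type*} [AddCommMonoid M]
    (g : Fin 6 → Fin 6 → Fin 6 → Fin 6 → Fin 6 → M) :
    (∑ a, ∑ b, ∑ c, ∑ d, ∑ e, g a b c d e) = ∑ e, ∑ a, ∑ b, ∑ c, ∑ d, g a b c d e :=
  (Finset.sum_congr rfl fun a _ => pull4 (g a)).trans Finset.sum_comm

private lemma pull6 {M : Type*} [AddCommMonoid M]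
    (g : Fin 6 → Fin 6 → Fin 6 → Fin 6 → Fin 6 → Fin 6 → M) :
    (∑ a, ∑ b, ∑ c, ∑ d, ∑ e, ∑ f, g a b c d e f)
      = ∑ f, ∑ a, ∑ b, ∑ c, ∑ d, ∑ e, g a b c d e f :=
  (Finset.sum_congr rfl fun a _ => pull5 (g a)).trans Finset.sum_comm

/-- the dual three-form `P̃` satisfies `𝒟(P) = (1/2){P̃, P}`,
where `{P,Q} = (1/(3!3!)) ε^{ijklmn} P_{ijk} Q_{lmn}` is the symplectic form on
`∧³(ℂ^6)*`. -/
theorem Dinv_eq_half_symplectic_Ptilde (P : Fin 6 → Fin 6 → Fin 6 → ℂ)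
    (hP : Antisym3 P) :
    Dinv P = (1/2 : ℂ) * ((1/36 : ℂ) * ∑ i, ∑ j, ∑ k, ∑ l, ∑ m, ∑ n,
      eps6 ![i, j, k, l, m, n] * Ptilde P i j k * P l m n) := by
  obtain ⟨h1, h2⟩ := hP
  have cyc : ∀ a b c, P a b c = P b c a := by
    intro a b c
    rw [h1 a b c, h2 b a c]; ring
  have key : ∀ i d, (∑ j, ∑ k, ∑ l, ∑ m, ∑ n,
      eps6 ![i, j, k, l, m, n] * P j k d * P l m n) = 12 * Kmat P i d := by
    intro i d
    have hc : ∀ j k l m n, eps6 ![i, j, k, l, m, n] * P j k d * P l m n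
        = eps6 ![i, j, k, l, m, n] * P d j k * P l m n := by
      intro j k l m n; rw [cyc d j k]
    simp_rw [hc]
    simp only [Kmat, Matrix.of_apply]
    rw [← mul_assoc]
    norm_num
  simp only [Dinv, Matrix.trace, Matrix.diag_apply, Matrix.mul_apply, Ptilde]
  have dist : ∀ i j k l m n, eps6 ![i, j, k, l, m, n] * (∑ d, P j k d * Kmat P d i) * P l m n
      = ∑ d, eps6 ![i, j, k, l, m, n] * P j k d * P l m n * Kmat P d i := by
    intro i j k l m n
    rw [Finset.mul_sum, Finset.sum_mul]
    exact Finset.sum_congr rfl fun d _ => by ring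
  simp_rw [dist]
  have pull : ∀ i, (∑ j, ∑ k, ∑ l, ∑ m, ∑ n, ∑ d,
        eps6 ![i, j, k, l, m, n] * P j k d * P l m n * Kmat P d i)
      = ∑ d, ∑ j, ∑ k, ∑ l, ∑ m, ∑ n,
        eps6 ![i, j, k, l, m, n] * P j k d * P l m n * Kmat P d i := fun i => pull6 _
  simp_rw [pull]
  have fact : ∀ i d, (∑ j, ∑ k, ∑ l, ∑ m, ∑ n,
        eps6 ![i, j, k, l, m, n] * P j k d * P l m n * Kmat P d i)
      = (12 * Kmat P i d) * Kmat P d i := by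
    intro i d
    rw [← key i d]
    simp only [Finset.sum_mul]
  simp_rw [fact]
  simp only [Finset.mul_sum]
  refine Finset.sum_congr rfl fun i _ => Finset.sum_congr rfl fun d _ => by ring
end
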